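/- Let E be an exact category admitting both a right abelian envelope (A_r(E), i_R) and a left abelian envelope (A_l(E), i_L). Then there exist a right exact functor F : A_r(E) → A_l(E) with F ∘ i_R naturally isomorphic to i_L and a left exact functor G : A_l(E) → A_r(E) with G ∘ i_L naturally isomorphic to i_R, and F is left adjoint to G. -/

import Mathlib

open CategoryTheory Limits Opposite

universe u

namespace Env

section Basics

variable {C : Type*} [Category C]

/-- `g` is a weak kernel of `f`. -/
def IsWeakKernel [Limits.HasZeroMorphisms C] {A B K : C} (f : B ⟶ A) (g : K ⟶ B) : Prop :=
  g ≫ f = 0 ∧ ∀ ⦃K' : C⦄ (g' : K' ⟶ B), g' ≫ f = 0 → ∃ t : K' ⟶ K, t ≫ g = g'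

/-- `h` is a weak cokernel of `f`. -/
def IsWeakCokernel [Limits.HasZeroMorphisms C] {A B Q : C} (f : A ⟶ B) (h : B ⟶ Q) : Prop :=
  f ≫ h = 0 ∧ ∀ ⦃Q' : C⦄ (h' : B ⟶ Q'), f ≫ h' = 0 → ∃ t : Q ⟶ Q', h ≫ t = h'

/-- A kernel–cokernel pair: `f ≫ g = 0`, `f` is a kernel of `g` and `g` is a cokernel of `f`. -/
structure IsKernelCokernelPair [Limits.HasZeroMorphisms C] {A B X : C}
    (f : A ⟶ B) (g : B ⟶ X) : Prop where
  zero : f ≫ g = 0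
  isKernel : Nonempty (IsLimit (KernelFork.ofι f zero))
  isCokernel : Nonempty (IsColimit (CokernelCofork.ofπ g zero))

end Basics

lemma map_comp_zero {C : Type*} [Category C] [Preadditive C]
    {D : Type*} [Category D] [Preadditive D]
    (F : C ⥤ D) (hF : F.Additive) {X Y Z : C} {f : X ⟶ Y} {g : Y ⟶ Z}
    (wzero : f ≫ g = 0) : F.map f ≫ F.map g = 0 := by
  haveI := hF
  rw [← F.map_comp, wzero, Functor.map_zero]

/-- A Quillen exact structure on an additive category: a distinguished class of conflations
(kernel–cokernel pairs) satisfying Quillen's axioms. -/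
structure ExactStructure (E : Type*) [Category E] [Preadditive E] where
  /-- `conf f g` means that `(f, g)` is a conflation. -/
  conf : ∀ ⦃A B C : E⦄, (A ⟶ B) → (B ⟶ C) → Prop
  conf_pair : ∀ ⦃A B C : E⦄ (f : A ⟶ B) (g : B ⟶ C), conf f g → IsKernelCokernelPair f g
  defl_id : ∀ X : E, ∃ (A : E) (f : A ⟶ X), conf f (𝟙 X)
  defl_comp : ∀ ⦃A B C : E⦄ (g : A ⟶ B) (g' : B ⟶ C),
    (∃ (K : E) (f : K ⟶ A), conf f g) → (∃ (K : E) (f : K ⟶ B), conf f g') →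
    ∃ (K : E) (f : K ⟶ A), conf f (g ≫ g')
  defl_pullback : ∀ ⦃B C C' : E⦄ (g : B ⟶ C) (h : C' ⟶ C),
    (∃ (K : E) (f : K ⟶ B), conf f g) →
    ∃ (B' : E) (p : B' ⟶ B) (q : B' ⟶ C') (w : p ≫ g = q ≫ h),
      (∃ (K : E) (f : K ⟶ B'), conf f q) ∧ Nonempty (IsLimit (PullbackCone.mk p q w))
  infl_pushout : ∀ ⦃A B A' : E⦄ (f : A ⟶ B) (h : A ⟶ A'),
    (∃ (C : E) (g : B ⟶ C), conf f g) →
    ∃ (B' : E) (p : B ⟶ B') (q : A' ⟶ B') (w : f ≫ p = h ≫ q),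
      (∃ (C : E) (g : B' ⟶ C), conf q g) ∧ Nonempty (IsColimit (PushoutCocone.mk p q w))

section Exact

variable {E : Type*} [Category E] [Preadditive E]

/-- `g` is a deflation for the exact structure `S`. -/
def ExactStructure.IsDeflation (S : ExactStructure E) {B C : E} (g : B ⟶ C) : Prop :=
  ∃ (K : E) (f : K ⟶ B), S.conf f g

/-- `f` is an inflation for the exact structure `S`. -/
def ExactStructure.IsInflation (S : ExactStructure E) {A B : E} (f : A ⟶ B) : Prop :=
  ∃ (C : E) (g : B ⟶ C), S.conf f g

/-- A functor from an exact category to an additive category is right exact if it is additive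
and for every conflation `(f, g)`, `F g` is a cokernel of `F f`. -/
structure IsRightExact (S : ExactStructure E) {B : Type*} [Category B] [Preadditive B]
    (F : E ⥤ B) : Prop where
  additive : F.Additive
  preserves : ∀ ⦃A X C : E⦄ (f : A ⟶ X) (g : X ⟶ C) (h : S.conf f g),
    Nonempty (IsColimit (CokernelCofork.ofπ (F.map g)
      (map_comp_zero F additive (S.conf_pair f g h).zero)))

/-- A functor from an exact category to an additive category is left exact if it is additive
and for every conflation `(f, g)`, `F f` is a kernel of `F g`. -/
structure IsLeftExact (S : ExactStructure E) {B : Type*} [Category B] [Preadditive B]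
    (F : E ⥤ B) : Prop where
  additive : F.Additive
  preserves : ∀ ⦃A X C : E⦄ (f : A ⟶ X) (g : X ⟶ C) (h : S.conf f g),
    Nonempty (IsLimit (KernelFork.ofι (F.map f)
      (map_comp_zero F additive (S.conf_pair f g h).zero)))

/-- `g : C ⟶ B` is an Ext-kernel of `f : B ⟶ A` (w.r.t. the exact structure `S`):
`g ≫ f = 0` and for every `g' : C' ⟶ B` with `g' ≫ f = 0` there is a deflation
`d : D ⟶ C'` such that `d ≫ g'` factors through `g`. -/
def IsExtKernel (S : ExactStructure E) {A B C : E} (f : B ⟶ A) (g : C ⟶ B) : Prop :=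
  g ≫ f = 0 ∧ ∀ ⦃C' : E⦄ (g' : C' ⟶ B), g' ≫ f = 0 →
    ∃ (D : E) (d : D ⟶ C'), S.IsDeflation d ∧ ∃ t : D ⟶ C, t ≫ g = d ≫ g'

/-- An exact category is left Ext-coherent if every morphism admits an Ext-kernel. -/
def LeftExtCoherent (S : ExactStructure E) : Prop :=
  ∀ ⦃B A : E⦄ (f : B ⟶ A), ∃ (C : E) (g : C ⟶ B), IsExtKernel S f g

end Exact

/-- An additive category is left coherent if every morphism admits a weak kernel. -/
def LeftCoherent (E : Type*) [Category E] [Preadditive E] : Prop :=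
  ∀ ⦃B A : E⦄ (f : B ⟶ A), ∃ (K : E) (g : K ⟶ B), IsWeakKernel f g

section MoreDefs

variable (C : Type*) [Category C] [Preadditive C]

/-- An additive functor between additive categories preserving cokernels: every morphism
which is a cokernel (of some morphism) is sent to a cokernel of its image. -/
structure PreservesCokernelsP {C : Type*} [Category C] [Preadditive C]
    {D : Type*} [Category D] [Preadditive D] (F : C ⥤ D) : Prop where
  additive : F.Additive
  preserves : ∀ ⦃X Y Z : C⦄ (f : X ⟶ Y) (c : Y ⟶ Z) (w : f ≫ c = 0),
    Nonempty (IsColimit (CokernelCofork.ofπ c w)) →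
    Nonempty (IsColimit (CokernelCofork.ofπ (F.map c) (map_comp_zero F additive w)))

/-- An additive category is left abelian if it has cokernels and for every morphism
`f : A ⟶ B` with cokernel `c : B ⟶ X` and every `g : D ⟶ B` with `g ≫ c = 0` there is
a morphism `d : E ⟶ D` which is a cokernel (of some morphism), such that `d ≫ g` factors
through `f`. -/
structure IsLeftAbelian : Prop where
  hasCokernels : HasCokernels C
  factor : ∀ ⦃A B X : C⦄ (f : A ⟶ B) (c : B ⟶ X) (w : f ≫ c = 0),
    Nonempty (IsColimit (CokernelCofork.ofπ c w)) →
    ∀ ⦃D : C⦄ (g : D ⟶ B), g ≫ c = 0 →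
      ∃ (W E : C) (u : W ⟶ E) (d : E ⟶ D) (w' : u ≫ d = 0),
        Nonempty (IsColimit (CokernelCofork.ofπ d w')) ∧ ∃ t : E ⟶ A, t ≫ f = d ≫ g

/-- A preadditive category (with its given preadditive structure) is abelian:
it has finite biproducts, kernels and cokernels, and every monomorphism and every
epimorphism is normal. -/
def IsAbelianP : Prop :=
  HasFiniteBiproducts C ∧ HasKernels C ∧ HasCokernels C ∧
    (∀ ⦃X Y : C⦄ (f : X ⟶ Y), Mono f → Nonempty (NormalMono f)) ∧
    (∀ ⦃X Y : C⦄ (f : X ⟶ Y), Epi f → Nonempty (NormalEpi f))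

end MoreDefs

/-- An object `X` is compact (finitely presented) if `Hom(X, -)` preserves filtered colimits
(indexed by small filtered categories in `Type u`). -/
def IsCompact {C : Type*} [Category C] (X : C) : Prop :=
  ∀ (J : Type u) (_ : SmallCategory J), IsFiltered J →
    Nonempty (PreservesColimitsOfShape J (coyoneda.obj (op X)))

section RexAbelian

variable {A : Type*} [Category A] [Abelian A] {B : Type*} [Category B] [Preadditive B]

/-- A functor from an abelian category (whose conflations are all kernel–cokernel pairs,
i.e. all short exact sequences) is right exact if it is additive and sends every short exact
sequence `(f, g)` to a diagram where `F g` is a cokernel of `F f`. -/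
structure IsRightExactAb (F : A ⥤ B) : Prop where
  additive : F.Additive
  preserves : ∀ ⦃X Y Z : A⦄ (f : X ⟶ Y) (g : Y ⟶ Z) (h : IsKernelCokernelPair f g),
    Nonempty (IsColimit (CokernelCofork.ofπ (F.map g) (map_comp_zero F additive h.zero)))

/-- A functor from an abelian category (whose conflations are all kernel–cokernel pairs,
i.e. all short exact sequences) is left exact if it is additive and sends every short exact
sequence `(f, g)` to a diagram where `F f` is a kernel of `F g`. -/
structure IsLeftExactAb (F : A ⥤ B) : Prop where
  additive : F.Additive
  preserves : ∀ ⦃X Y Z : A⦄ (f : X ⟶ Y) (g : Y ⟶ Z) (h : IsKernelCokernelPair f g),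
    Nonempty (IsLimit (KernelFork.ofι (F.map f) (map_comp_zero F additive h.zero)))

end RexAbelian

section Envelope

/-- `(A, i)` is a right abelian envelope of the exact category `(E, S)`: `i` is right exact
and for every abelian category `B`, precomposition with `i` induces an equivalence from the
category of right exact functors `A ⥤ B` to the category of right exact functors `E ⥤ B`.

The equivalence given by precomposition is expressed by: precomposition with `i` sends right
exact functors to right exact functors, it is fully faithful (whiskering is a bijection on
natural transformations) and essentially surjective (every right exact `E ⥤ B` is isomorphic
to some `i ⋙ G` with `G` right exact). -/
structure IsRightAbelianEnvelope.{u₀, w₀, v₁, w₁, v₂, w₂} {E : Type u₀} [Category.{w₀} E]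
    [Preadditive E] (S : ExactStructure E)
    {A : Type v₁} [Category.{w₁} A] [Abelian A] (i : E ⥤ A) : Prop where
  rightExact : IsRightExact S i
  comp_rightExact : ∀ (B : Type v₂) [Category.{w₂} B] [Abelian B] (G : A ⥤ B),
    IsRightExactAb G → IsRightExact S (i ⋙ G)
  whisker_bijective : ∀ (B : Type v₂) [Category.{w₂} B] [Abelian B] (G G' : A ⥤ B),
    IsRightExactAb G → IsRightExactAb G' →
      Function.Bijective (fun σ : G ⟶ G' => Functor.whiskerLeft i σ)
  essSurj : ∀ (B : Type v₂) [Category.{w₂} B] [Abelian B] (F : E ⥤ B),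
    IsRightExact S F → ∃ G : A ⥤ B, IsRightExactAb G ∧ Nonempty (i ⋙ G ≅ F)

/-- `(A, i)` is a left abelian envelope of the exact category `(E, S)`: the dual notion of
`IsRightAbelianEnvelope`, with left exact functors in place of right exact ones. -/
structure IsLeftAbelianEnvelope.{u₀, w₀, v₁, w₁, v₂, w₂} {E : Type u₀} [Category.{w₀} E]
    [Preadditive E] (S : ExactStructure E)
    {A : Type v₁} [Category.{w₁} A] [Abelian A] (i : E ⥤ A) : Prop where
  leftExact : IsLeftExact S i
  comp_leftExact : ∀ (B : Type v₂) [Category.{w₂} B] [Abelian B] (G : A ⥤ B),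
    IsLeftExactAb G → IsLeftExact S (i ⋙ G)
  whisker_bijective : ∀ (B : Type v₂) [Category.{w₂} B] [Abelian B] (G G' : A ⥤ B),
    IsLeftExactAb G → IsLeftExactAb G' →
      Function.Bijective (fun σ : G ⟶ G' => Functor.whiskerLeft i σ)
  essSurj : ∀ (B : Type v₂) [Category.{w₂} B] [Abelian B] (F : E ⥤ B),
    IsLeftExact S F → ∃ G : A ⥤ B, IsLeftExactAb G ∧ Nonempty (i ⋙ G ≅ F)

/-- A witness for the existence of a right abelian envelope of `(E, S)`: an abelian
category (with object type in `Type (u + 1)` and hom types in `Type u`) together with a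
right exact functor from `E` satisfying the universal property of the right abelian
envelope (where the test abelian categories are taken of the same size). -/
structure RightAbelianEnvelopeWitness {E : Type u} [SmallCategory E] [Preadditive E]
    (S : ExactStructure E) where
  A : Type (u + 1)
  [cat : Category.{u} A]
  [ab : Abelian A]
  i : E ⥤ A
  env : IsRightAbelianEnvelope.{u, u, u + 1, u, u + 1, u} S i

/-- Existence of a right abelian envelope of `(E, S)`. -/
def HasRightAbelianEnvelope {E : Type u} [SmallCategory E] [Preadditive E]
    (S : ExactStructure E) : Prop :=
  Nonempty (RightAbelianEnvelopeWitness S)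

end Envelope

section Lex

variable {E : Type u} [SmallCategory E] [Preadditive E]

/-- A functor `Eᵒᵖ ⥤ Ab` is left exact w.r.t. the exact structure `S` if it is additive and
sends every conflation `(f : A ⟶ B, g : B ⟶ C)` to an exact sequence
`0 ⟶ F C ⟶ F B ⟶ F A`: `F g.op` is injective and its image is the kernel of `F f.op`. -/
structure IsLexFunctor (S : ExactStructure E) (F : Eᵒᵖ ⥤ AddCommGrpCat.{u}) : Prop where
  additive : F.Additive
  inj : ∀ ⦃A B C : E⦄ (f : A ⟶ B) (g : B ⟶ C), S.conf f g →
    Function.Injective (F.map g.op)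
  ex : ∀ ⦃A B C : E⦄ (f : A ⟶ B) (g : B ⟶ C), S.conf f g →
    ∀ x : F.obj (op B), F.map f.op x = 0 ↔ ∃ y : F.obj (op C), F.map g.op y = x

/-- The category `Lex(E)` of left exact functors `Eᵒᵖ ⥤ Ab`. -/
abbrev LexCat (S : ExactStructure E) := ObjectProperty.FullSubcategory (IsLexFunctor S)

/-- The full subcategory of compact objects of `Lex(E)`. -/
abbrev LexCompact (S : ExactStructure E) :=
  ObjectProperty.FullSubcategory (fun F : LexCat S => IsCompact.{u} F)

lemma yoneda_isLex (S : ExactStructure E) (X : E) :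
    IsLexFunctor S (preadditiveYoneda.obj X) where
  additive := inferInstance
  inj := by
    intro A B C f g hc
    obtain ⟨w, hker, hcoker⟩ := S.conf_pair f g hc
    intro x y hxy
    exact Cofork.IsColimit.hom_ext hcoker.some hxy
  ex := by
    intro A B C f g hc
    obtain ⟨w, hker, hcoker⟩ := S.conf_pair f g hc
    intro x
    constructor
    · intro hx
      obtain ⟨y, hy⟩ := CokernelCofork.IsColimit.desc' hcoker.some x hx
      exact ⟨y, hy⟩
    · rintro ⟨y, rfl⟩
      change f ≫ g ≫ (show C ⟶ X from y) = 0
      rw [← Category.assoc, w, zero_comp]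

/-- The Yoneda embedding of `E` into `Lex(E)`, sending `X` to `Hom_E(-, X)`. -/
def yonedaLex (S : ExactStructure E) : E ⥤ LexCat S :=
  ObjectProperty.lift _ preadditiveYoneda (yoneda_isLex S)

/-- The Yoneda embedding of `E` into the subcategory of compact objects of `Lex(E)`, given
a proof that all representable functors are compact. -/
def yonedaLexC (S : ExactStructure E) (hc : ∀ X : E, IsCompact.{u} ((yonedaLex S).obj X)) :
    E ⥤ LexCompact S :=
  ObjectProperty.lift _ (yonedaLex S) hc

end Lex

section LFP

variable {C : Type*} [Category C]

/-- `X` is a filtered colimit of compact objects. -/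
def IsFilteredColimitOfCompacts (X : C) : Prop :=
  ∃ (J : Type u) (_ : SmallCategory J) (_ : IsFiltered J) (F : J ⥤ C)
    (_ : ∀ j : J, IsCompact.{u} (F.obj j)),
    Nonempty ((t : Cocone F) ×' (IsColimit t) ×' (t.pt ≅ X))

/-- A category is locally finitely presented if it has (small) filtered colimits, its
compact objects form a skeletally small full subcategory, and every object is a filtered
colimit of compact objects. -/
def IsLocallyFinitelyPresented (C : Type*) [Category C] : Prop :=
  HasFilteredColimitsOfSize.{u, u} C ∧
    EssentiallySmall.{u} (ObjectProperty.FullSubcategory (fun X : C => IsCompact.{u} X)) ∧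
    ∀ X : C, IsFilteredColimitOfCompacts.{u} X

/-- AB5: small filtered colimits are exact, i.e. for every small filtered category `J`
(such that `C` has colimits of shape `J`), the colimit functor `(J ⥤ C) ⥤ C` preserves
finite limits. -/
def AB5P (C : Type*) [Category C] : Prop :=
  ∀ (J : Type u) (_ : SmallCategory J), IsFiltered J →
    ∀ (h : HasColimitsOfShape J C),
      Nonempty (PreservesFiniteLimits (@colim J _ C _ h))

/-- A Grothendieck category: an abelian category (`IsAbelianP` w.r.t. the given preadditive
structure) with a generator and small colimits, in which small filtered colimits are
exact (AB5). -/
def IsGrothendieckP (C : Type*) [Category C] [Preadditive C] : Prop :=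
  IsAbelianP C ∧ HasColimitsOfSize.{u, u} C ∧ (∃ G : C, IsSeparator G) ∧ AB5P.{u} C

end LFP

universe w

/-!
Both universal functors are fully faithful: by a Yoneda argument, the left exact functor
`Hom_E(V, -)` extends along `iL`, and the extension recovers every morphism `iL V ⟶ iL W`
(dually for `iR`). Since the objects `iL V` cogenerate `A_l`, `iL` preserves epimorphisms and is
therefore also right exact; dually `iR` is left exact. This gives `F` and `G`.

For `V, W ∈ E` there are isomorphisms
`Hom(F (iR V), iL W) ≅ Hom(iL V, iL W) ≅ Hom(V, W) ≅ Hom(iR V, iR W) ≅ Hom(iR V, G (iL W))`,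
natural in `V` and `W`. As functors of `M ∈ A_r` into `Abᵒᵖ`, both `Hom(F M, iL W)` and
`Hom(M, G (iL W))` are right exact, so the universal property of `iR` extends the isomorphism to
all `M`; as functors of `N ∈ A_l`, both `Hom(F M, N)` and `Hom(M, G N)` are left exact, so the
universal property of `iL` extends it to all `N`. Naturality in the remaining variable follows
each time from the injectivity of restriction along `iR`, resp. `iL`.
-/

section HomFunctorExactness

variable {A : Type*} [Category A] [Abelian A] {B : Type*} [Category B] [Preadditive B]
  {C : Type*} [Category C] [Preadditive C]

lemma isLeftExactAb_of_preservesKernels (H : A ⥤ C) [H.Additive]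
    [PreservesLimitsOfShape WalkingParallelPair H] : IsLeftExactAb H :=
  ⟨inferInstance, fun _ _ _ _ _ h => ⟨KernelFork.mapIsLimit _ h.isKernel.some H⟩⟩

lemma IsLeftExactAb.comp {G : A ⥤ B} (hG : IsLeftExactAb G) (H : B ⥤ C) [H.Additive]
    [PreservesLimitsOfShape WalkingParallelPair H] : IsLeftExactAb (G ⋙ H) :=
  have := hG.additive
  ⟨inferInstance, fun _ _ _ f g h => ⟨KernelFork.mapIsLimit _ (hG.preserves f g h).some H⟩⟩

lemma isRightExactAb_rightOp (H : Aᵒᵖ ⥤ C) [H.Additive]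
    [PreservesLimitsOfShape WalkingParallelPair H] : IsRightExactAb H.rightOp :=
  ⟨inferInstance, fun _ _ _ _ g h =>
    ⟨KernelFork.IsLimit.ofιOp _ (KernelFork.map_condition _ H) (KernelFork.mapIsLimit _
      (CokernelCofork.IsColimit.ofπOp g h.zero h.isCokernel.some) H)⟩⟩

lemma IsRightExactAb.comp_rightOp {F : A ⥤ B} (hF : IsRightExactAb F) (H : Bᵒᵖ ⥤ C)
    [H.Additive] [PreservesLimitsOfShape WalkingParallelPair H] :
    IsRightExactAb (F ⋙ H.rightOp) :=
  have := hF.additive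
  ⟨inferInstance, fun _ _ _ f g h =>
    ⟨KernelFork.IsLimit.ofιOp _ (KernelFork.map_condition _ H) (KernelFork.mapIsLimit _
      (CokernelCofork.IsColimit.ofπOp _ _ (hF.preserves f g h).some) H)⟩⟩

variable {E : Type*} [Category E] [Preadditive E] (S : ExactStructure E)

lemma isLeftExact_of_preservesKernels (H : E ⥤ C) [H.Additive]
    [PreservesLimitsOfShape WalkingParallelPair H] : IsLeftExact S H :=
  ⟨inferInstance, fun _ _ _ f g h =>
    ⟨KernelFork.mapIsLimit _ (S.conf_pair f g h).isKernel.some H⟩⟩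

lemma isRightExact_rightOp (H : Eᵒᵖ ⥤ C) [H.Additive]
    [PreservesLimitsOfShape WalkingParallelPair H] : IsRightExact S H.rightOp :=
  ⟨inferInstance, fun _ _ _ f g h =>
    ⟨KernelFork.IsLimit.ofιOp _ (KernelFork.map_condition _ H) (KernelFork.mapIsLimit _
      (CokernelCofork.IsColimit.ofπOp g _ (S.conf_pair f g h).isCokernel.some) H)⟩⟩

end HomFunctorExactness

section WhiskerLeftLift

variable {E : Type*} [Category E] {A : Type*} [Category A] {B : Type*} [Category B]

def WhiskerLeftBijectiveOn (i : E ⥤ A) (p : (A ⥤ B) → Prop) : Prop :=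
  ∀ P Q : A ⥤ B, p P → p Q →
    Function.Bijective (fun σ : P ⟶ Q => Functor.whiskerLeft i σ)

variable {i : E ⥤ A} {p : (A ⥤ B) → Prop}

noncomputable def liftNatTrans (hi : WhiskerLeftBijectiveOn i p) {P Q : A ⥤ B} (hP : p P)
    (hQ : p Q) (σ : i ⋙ P ⟶ i ⋙ Q) : P ⟶ Q :=
  (Equiv.ofBijective _ (hi P Q hP hQ)).symm σ

@[simp]
lemma whiskerLeft_liftNatTrans (hi : WhiskerLeftBijectiveOn i p) {P Q : A ⥤ B} (hP : p P)
    (hQ : p Q) (σ : i ⋙ P ⟶ i ⋙ Q) : Functor.whiskerLeft i (liftNatTrans hi hP hQ σ) = σ :=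
  (Equiv.ofBijective _ (hi P Q hP hQ)).apply_symm_apply σ

lemma natTrans_ext_of_whiskerLeft (hi : WhiskerLeftBijectiveOn i p) {P Q : A ⥤ B} (hP : p P)
    (hQ : p Q) {σ τ : P ⟶ Q} (h : Functor.whiskerLeft i σ = Functor.whiskerLeft i τ) :
    σ = τ :=
  (hi P Q hP hQ).1 h

noncomputable def liftIso (hi : WhiskerLeftBijectiveOn i p) {P Q : A ⥤ B} (hP : p P) (hQ : p Q)
    (e : i ⋙ P ≅ i ⋙ Q) : P ≅ Q where
  hom := liftNatTrans hi hP hQ e.hom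
  inv := liftNatTrans hi hQ hP e.inv
  hom_inv_id := natTrans_ext_of_whiskerLeft hi hP hP (by simp)
  inv_hom_id := natTrans_ext_of_whiskerLeft hi hQ hQ (by simp)

lemma whiskerLeft_liftIso_hom (hi : WhiskerLeftBijectiveOn i p) {P Q : A ⥤ B} (hP : p P)
    (hQ : p Q) (e : i ⋙ P ≅ i ⋙ Q) : Functor.whiskerLeft i (liftIso hi hP hQ e).hom = e.hom :=
  whiskerLeft_liftNatTrans hi hP hQ e.hom

end WhiskerLeftLift

section FunctorOnHoms

variable {C : Type*} [Category C] [Preadditive C] {D : Type*} [Category D] [Preadditive D]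

@[simp]
lemma preadditiveCoyoneda_obj_map_hom_apply (X : C) {Y Z : C} (f : Y ⟶ Z) (v : X ⟶ Y) :
    ((preadditiveCoyoneda.obj (op X)).map f).hom v = v ≫ f := rfl

@[simp]
lemma preadditiveYoneda_obj_map_hom_apply (X : C) {Y Z : C} (f : Y ⟶ Z) (v : Z ⟶ X) :
    ((preadditiveYoneda.obj X).map f.op).hom v = f ≫ v := rfl

def mapPreadditiveCoyoneda (Φ : C ⥤ D) [Φ.Additive] (V : C) :
    preadditiveCoyoneda.obj (op V) ⟶ Φ ⋙ preadditiveCoyoneda.obj (op (Φ.obj V)) where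
  app _ := AddCommGrpCat.ofHom Φ.mapAddHom
  naturality _ _ f := by ext v; exact Φ.map_comp v f

def mapPreadditiveYoneda (Φ : C ⥤ D) [Φ.Additive] (W : C) :
    Φ ⋙ (preadditiveYoneda.obj (Φ.obj W)).rightOp ⟶ (preadditiveYoneda.obj W).rightOp where
  app _ := (AddCommGrpCat.ofHom Φ.mapAddHom).op
  naturality _ _ f := Quiver.Hom.unop_inj (by ext v; exact (Φ.map_comp f v).symm)

end FunctorOnHoms

namespace IsLeftAbelianEnvelope

variable {E : Type*} [Category.{w} E] [Preadditive E] {S : ExactStructure E}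
  {A : Type*} [Category.{w} A] [Abelian A] {i : E ⥤ A}

lemma map_bijective (hL : IsLeftAbelianEnvelope.{_, w, _, w, w + 1, w} S i) (V W : E) :
    Function.Bijective (i.map : (V ⟶ W) → (i.obj V ⟶ i.obj W)) := by
  have := hL.leftExact.additive
  obtain ⟨L, hLex, ⟨ρ⟩⟩ :=
    hL.essSurj _ _ (isLeftExact_of_preservesKernels S (preadditiveCoyoneda.obj (op V)))
  obtain ⟨x, hx⟩ : ∃ x : L.obj (i.obj V), ρ.hom.app V x = 𝟙 V :=
    ⟨_, ConcreteCategory.congr_hom (ρ.inv_hom_id_app V) (𝟙 V)⟩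
  have recover (W : E) (t : V ⟶ W) : ρ.hom.app W (L.map (i.map t) x) = t := by
    simpa [hx] using ConcreteCategory.congr_hom (ρ.hom.naturality t) x
  refine ⟨fun t t' h => by rw [← recover W t, ← recover W t', h], fun δ => ?_⟩
  let Θ := liftNatTrans (hL.whisker_bijective _) hLex (isLeftExactAb_of_preservesKernels _)
    (ρ.hom ≫ mapPreadditiveCoyoneda i V)
  have hΘ (W : E) (y : L.obj (i.obj W)) : Θ.app (i.obj W) y = i.map (ρ.hom.app W y) :=
    ConcreteCategory.congr_hom (NatTrans.congr_app (whiskerLeft_liftNatTrans _ _ _ _) W) y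
  refine ⟨ρ.hom.app W (L.map δ x), ?_⟩
  rw [← hΘ, NatTrans.naturality_apply, hΘ, hx]
  simp

noncomputable def fullyFaithful (hL : IsLeftAbelianEnvelope.{_, w, _, w, w + 1, w} S i) :
    i.FullyFaithful where
  preimage {V W} := (Equiv.ofBijective _ (hL.map_bijective V W)).symm
  map_preimage := (Equiv.ofBijective _ (hL.map_bijective _ _)).apply_symm_apply
  preimage_map := (Equiv.ofBijective _ (hL.map_bijective _ _)).symm_apply_apply

lemma eq_zero_of_forall_comp_eq_zero (hL : IsLeftAbelianEnvelope.{_, w, _, w, w + 1, w} S i)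
    {X T : A} (δ : X ⟶ T) (h : ∀ (V : E) (u : T ⟶ i.obj V), δ ≫ u = 0) : δ = 0 := by
  have : preadditiveCoyoneda.map δ.op = 0 :=
    natTrans_ext_of_whiskerLeft (hL.whisker_bijective _) (isLeftExactAb_of_preservesKernels _)
      (isLeftExactAb_of_preservesKernels _) (by ext V u; exact h V u)
  exact (Category.comp_id δ).symm.trans
    (ConcreteCategory.congr_hom (NatTrans.congr_app this T) (𝟙 T))

lemma map_epi (hL : IsLeftAbelianEnvelope.{_, w, _, w, w + 1, w} S i) {Y Z : E} (g : Y ⟶ Z)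
    [Epi g] : Epi (i.map g) := by
  have := hL.leftExact.additive
  refine Preadditive.epi_of_cancel_zero _ fun {T} δ hδ =>
    hL.eq_zero_of_forall_comp_eq_zero δ fun V u => ?_
  obtain ⟨t, ht⟩ := hL.fullyFaithful.map_surjective (δ ≫ u)
  have : g ≫ t = 0 := hL.fullyFaithful.map_injective (by simp [ht, reassoc_of% hδ])
  rw [← ht, (cancel_epi g).1 (this.trans comp_zero.symm), i.map_zero]

lemma rightExact (hL : IsLeftAbelianEnvelope.{_, w, _, w, w + 1, w} S i) : IsRightExact S i := by
  have := hL.leftExact.additive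
  refine ⟨inferInstance, fun _ _ _ f g hfg => ?_⟩
  have : Epi g := epi_of_isColimit_cofork (S.conf_pair f g hfg).isCokernel.some
  have := hL.map_epi g
  exact ⟨Abelian.epiIsCokernelOfKernel _ (hL.leftExact.preserves f g hfg).some⟩

end IsLeftAbelianEnvelope

namespace IsRightAbelianEnvelope

variable {E : Type*} [Category.{w} E] [Preadditive E] {S : ExactStructure E}
  {A : Type*} [Category.{w} A] [Abelian A] {i : E ⥤ A}

lemma map_bijective (hR : IsRightAbelianEnvelope.{_, w, _, w, w + 1, w} S i) (V W : E) :
    Function.Bijective (i.map : (V ⟶ W) → (i.obj V ⟶ i.obj W)) := by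
  have := hR.rightExact.additive
  obtain ⟨R, hRex, ⟨ρ⟩⟩ :=
    hR.essSurj _ _ (isRightExact_rightOp S (preadditiveYoneda.obj W))
  obtain ⟨x, hx⟩ : ∃ x : (R.obj (i.obj W)).unop, (ρ.inv.app W).unop x = 𝟙 W :=
    ⟨_, ConcreteCategory.congr_hom (congrArg Quiver.Hom.unop (ρ.inv_hom_id_app W)) (𝟙 W)⟩
  have recover (V : E) (t : V ⟶ W) : (ρ.inv.app V).unop ((R.map (i.map t)).unop x) = t := by
    simpa [hx] using
      (ConcreteCategory.congr_hom (congrArg Quiver.Hom.unop (ρ.inv.naturality t)) x).symm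
  refine ⟨fun t t' h => by rw [← recover V t, ← recover V t', h], fun δ => ?_⟩
  let Θ := liftNatTrans (hR.whisker_bijective _) (isRightExactAb_rightOp _) hRex
    (mapPreadditiveYoneda i W ≫ ρ.inv)
  have hΘ (V : E) (y : (R.obj (i.obj V)).unop) :
      (Θ.app (i.obj V)).unop y = i.map ((ρ.inv.app V).unop y) :=
    ConcreteCategory.congr_hom
      (congrArg Quiver.Hom.unop (NatTrans.congr_app (whiskerLeft_liftNatTrans _ _ _ _) V)) y
  refine ⟨(ρ.inv.app V).unop ((R.map δ).unop x), ?_⟩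
  have := ConcreteCategory.congr_hom (congrArg Quiver.Hom.unop (Θ.naturality δ)) x
  simp only [unop_comp, ConcreteCategory.comp_apply] at this
  rw [← hΘ, ← this, hΘ, hx]
  simp

noncomputable def fullyFaithful (hR : IsRightAbelianEnvelope.{_, w, _, w, w + 1, w} S i) :
    i.FullyFaithful where
  preimage {V W} := (Equiv.ofBijective _ (hR.map_bijective V W)).symm
  map_preimage := (Equiv.ofBijective _ (hR.map_bijective _ _)).apply_symm_apply
  preimage_map := (Equiv.ofBijective _ (hR.map_bijective _ _)).symm_apply_apply

lemma eq_zero_of_forall_comp_eq_zero (hR : IsRightAbelianEnvelope.{_, w, _, w, w + 1, w} S i)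
    {T X : A} (δ : T ⟶ X) (h : ∀ (V : E) (u : i.obj V ⟶ T), u ≫ δ = 0) : δ = 0 := by
  have : NatTrans.rightOp (preadditiveYoneda.map δ) = 0 :=
    natTrans_ext_of_whiskerLeft (hR.whisker_bijective _) (isRightExactAb_rightOp _)
      (isRightExactAb_rightOp _)
      (by ext V; apply Quiver.Hom.unop_inj; ext u; exact h V u)
  exact (Category.id_comp δ).symm.trans (ConcreteCategory.congr_hom
    (congrArg Quiver.Hom.unop (NatTrans.congr_app this T)) (𝟙 T))

lemma map_mono (hR : IsRightAbelianEnvelope.{_, w, _, w, w + 1, w} S i) {X Y : E} (f : X ⟶ Y)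
    [Mono f] : Mono (i.map f) := by
  have := hR.rightExact.additive
  refine Preadditive.mono_of_cancel_zero _ fun {T} δ hδ =>
    hR.eq_zero_of_forall_comp_eq_zero δ fun V u => ?_
  obtain ⟨t, ht⟩ := hR.fullyFaithful.map_surjective (u ≫ δ)
  have : t ≫ f = 0 := hR.fullyFaithful.map_injective (by simp [ht, hδ])
  rw [← ht, (cancel_mono f).1 (this.trans zero_comp.symm), i.map_zero]

lemma leftExact (hR : IsRightAbelianEnvelope.{_, w, _, w, w + 1, w} S i) : IsLeftExact S i := by
  have := hR.rightExact.additive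
  refine ⟨inferInstance, fun _ _ _ f g hfg => ?_⟩
  have : Mono f := mono_of_isLimit_fork (S.conf_pair f g hfg).isKernel.some
  have := hR.map_mono f
  exact ⟨Abelian.monoIsKernelOfCokernel _ (hR.rightExact.preserves f g hfg).some⟩

end IsRightAbelianEnvelope

lemma _root_.CategoryTheory.Functor.FullyFaithful.preimage_add {C D : Type*} [Category C]
    [Preadditive C] [Category D] [Preadditive D] {Φ : C ⥤ D} [Φ.Additive]
    (hΦ : Φ.FullyFaithful) {X Y : C} (f g : Φ.obj X ⟶ Φ.obj Y) :
    hΦ.preimage (f + g) = hΦ.preimage f + hΦ.preimage g :=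
  hΦ.map_injective (by simp)

section Adjunction

variable {E : Type*} [Category.{w} E] [Preadditive E] {S : ExactStructure E}
  {Ar : Type*} [Category.{w} Ar] [Abelian Ar] {iR : E ⥤ Ar}
  {Al : Type*} [Category.{w} Al] [Abelian Al] {iL : E ⥤ Al}
  (hR : IsRightAbelianEnvelope.{_, w, _, w, w + 1, w} S iR)
  (hL : IsLeftAbelianEnvelope.{_, w, _, w, w + 1, w} S iL)
  {F : Ar ⥤ Al} {G : Al ⥤ Ar} (hF : IsRightExactAb F) (hG : IsLeftExactAb G)
  (α : iR ⋙ F ≅ iL) (β : iL ⋙ G ≅ iR)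

@[simps]
noncomputable def adjHomAddEquiv (V W : E) :
    (F.obj (iR.obj V) ⟶ iL.obj W) ≃+ (iR.obj V ⟶ G.obj (iL.obj W)) :=
  have := hR.rightExact.additive
  have := hL.leftExact.additive
  { toFun φ := iR.map (hL.fullyFaithful.preimage (α.inv.app V ≫ φ)) ≫ β.inv.app W
    invFun ψ := α.hom.app V ≫ iL.map (hR.fullyFaithful.preimage (ψ ≫ β.hom.app W))
    left_inv φ := by
      simp only [Category.assoc, Iso.inv_hom_id_app, Category.comp_id,
        Functor.FullyFaithful.preimage_map, Functor.FullyFaithful.map_preimage,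
        Iso.hom_inv_id_app_assoc]
    right_inv ψ := by
      simp only [Functor.FullyFaithful.preimage_map, Iso.inv_hom_id_app_assoc,
        Functor.FullyFaithful.map_preimage, Category.assoc, Iso.hom_inv_id_app, Functor.comp_obj,
        Category.comp_id]
    map_add' φ φ' := by simp [Functor.FullyFaithful.preimage_add] }

lemma adjHomAddEquiv_naturality_left {V V' : E} (e : V ⟶ V') (W : E)
    (φ : F.obj (iR.obj V') ⟶ iL.obj W) :
    adjHomAddEquiv hR hL α β V W (F.map (iR.map e) ≫ φ) =
      iR.map e ≫ adjHomAddEquiv hR hL α β V' W φ := by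
  have := hL.leftExact.additive
  have h : α.inv.app V ≫ F.map (iR.map e) = iL.map e ≫ α.inv.app V' :=
    (α.inv.naturality e).symm
  simp only [adjHomAddEquiv_apply, reassoc_of% h, Functor.FullyFaithful.preimage_comp,
    Functor.FullyFaithful.preimage_map, Functor.map_comp, Category.assoc]

lemma adjHomAddEquiv_naturality_right (V : E) {W W' : E} (w : W ⟶ W')
    (φ : F.obj (iR.obj V) ⟶ iL.obj W) :
    adjHomAddEquiv hR hL α β V W' (φ ≫ iL.map w) =
      adjHomAddEquiv hR hL α β V W φ ≫ G.map (iL.map w) := by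
  have h : β.inv.app W ≫ G.map (iL.map w) = iR.map w ≫ β.inv.app W' :=
    (β.inv.naturality w).symm
  rw [adjHomAddEquiv_apply, adjHomAddEquiv_apply, Category.assoc, h, ← iR.map_comp_assoc]
  congr 2
  exact hL.fullyFaithful.map_injective (by simp)

noncomputable def adjYonedaIsoRestricted (W : E) :
    iR ⋙ (preadditiveYoneda.obj (G.obj (iL.obj W))).rightOp ≅
      iR ⋙ F ⋙ (preadditiveYoneda.obj (iL.obj W)).rightOp :=
  NatIso.ofComponents (fun V => (adjHomAddEquiv hR hL α β V W).toAddCommGrpIso.op)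
    fun e => Quiver.Hom.unop_inj <| by
      ext φ
      exact (adjHomAddEquiv_naturality_left hR hL α β e W φ).symm

noncomputable def adjYonedaIso (W : E) :
    (preadditiveYoneda.obj (G.obj (iL.obj W))).rightOp ≅
      F ⋙ (preadditiveYoneda.obj (iL.obj W)).rightOp :=
  liftIso (hR.whisker_bijective _) (isRightExactAb_rightOp _) (hF.comp_rightOp _)
    (adjYonedaIsoRestricted hR hL α β W)

lemma whiskerLeft_adjYonedaIso_hom (W : E) :
    Functor.whiskerLeft iR (adjYonedaIso hR hL hF α β W).hom =
      (adjYonedaIsoRestricted hR hL α β W).hom :=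
  whiskerLeft_liftIso_hom _ _ _ _

lemma adjYonedaIso_naturality {W W' : E} (w : W ⟶ W') :
    NatTrans.rightOp (preadditiveYoneda.map (G.map (iL.map w))) ≫
        (adjYonedaIso hR hL hF α β W).hom =
      (adjYonedaIso hR hL hF α β W').hom ≫
        Functor.whiskerLeft F (NatTrans.rightOp (preadditiveYoneda.map (iL.map w))) := by
  refine natTrans_ext_of_whiskerLeft (hR.whisker_bijective _) (isRightExactAb_rightOp _)
    (hF.comp_rightOp _) ?_
  rw [Functor.whiskerLeft_comp, Functor.whiskerLeft_comp, whiskerLeft_adjYonedaIso_hom,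
    whiskerLeft_adjYonedaIso_hom]
  ext V : 2
  apply Quiver.Hom.unop_inj
  ext φ
  exact (adjHomAddEquiv_naturality_right hR hL α β V w φ).symm

noncomputable def adjCoyonedaIsoRestricted (M : Ar) :
    iL ⋙ preadditiveCoyoneda.obj (op (F.obj M)) ≅ iL ⋙ G ⋙ preadditiveCoyoneda.obj (op M) :=
  NatIso.ofComponents (fun W => ((adjYonedaIso hR hL hF α β W).app M).unop)
    fun w => by
      ext φ
      exact (ConcreteCategory.congr_hom (congrArg Quiver.Hom.unop
        (NatTrans.congr_app (adjYonedaIso_naturality hR hL hF α β w) M)) φ).symm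

noncomputable def adjCoyonedaIso (M : Ar) :
    preadditiveCoyoneda.obj (op (F.obj M)) ≅ G ⋙ preadditiveCoyoneda.obj (op M) :=
  liftIso (hL.whisker_bijective _) (isLeftExactAb_of_preservesKernels _) (hG.comp _)
    (adjCoyonedaIsoRestricted hR hL hF α β M)

lemma whiskerLeft_adjCoyonedaIso_hom (M : Ar) :
    Functor.whiskerLeft iL (adjCoyonedaIso hR hL hF hG α β M).hom =
      (adjCoyonedaIsoRestricted hR hL hF α β M).hom :=
  whiskerLeft_liftIso_hom _ _ _ _

lemma adjCoyonedaIso_naturality {M' M : Ar} (m : M' ⟶ M) :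
    preadditiveCoyoneda.map (F.map m).op ≫ (adjCoyonedaIso hR hL hF hG α β M').hom =
      (adjCoyonedaIso hR hL hF hG α β M).hom ≫
        Functor.whiskerLeft G (preadditiveCoyoneda.map m.op) := by
  refine natTrans_ext_of_whiskerLeft (hL.whisker_bijective _)
    (isLeftExactAb_of_preservesKernels _) (hG.comp _) ?_
  rw [Functor.whiskerLeft_comp, Functor.whiskerLeft_comp, whiskerLeft_adjCoyonedaIso_hom,
    whiskerLeft_adjCoyonedaIso_hom]
  ext W φ
  exact (ConcreteCategory.congr_hom
    (congrArg Quiver.Hom.unop ((adjYonedaIso hR hL hF α β W).hom.naturality m)) φ).symm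

noncomputable def adjHomEquiv (M : Ar) (N : Al) : (F.obj M ⟶ N) ≃ (M ⟶ G.obj N) where
  toFun φ := (adjCoyonedaIso hR hL hF hG α β M).hom.app N φ
  invFun ψ := (adjCoyonedaIso hR hL hF hG α β M).inv.app N ψ
  left_inv := ConcreteCategory.congr_hom ((adjCoyonedaIso hR hL hF hG α β M).hom_inv_id_app N)
  right_inv := ConcreteCategory.congr_hom ((adjCoyonedaIso hR hL hF hG α β M).inv_hom_id_app N)

lemma adjHomEquiv_naturality_left {M' M : Ar} (m : M' ⟶ M) {N : Al} (φ : F.obj M ⟶ N) :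
    adjHomEquiv hR hL hF hG α β M' N (F.map m ≫ φ) =
      m ≫ adjHomEquiv hR hL hF hG α β M N φ :=
  ConcreteCategory.congr_hom
    (NatTrans.congr_app (adjCoyonedaIso_naturality hR hL hF hG α β m) N) φ

noncomputable def envelopesAdjunction : F ⊣ G :=
  Adjunction.mkOfHomEquiv
    { homEquiv := adjHomEquiv hR hL hF hG α β
      homEquiv_naturality_left_symm {M' M N} m ψ := by
        rw [Equiv.symm_apply_eq, adjHomEquiv_naturality_left, Equiv.apply_symm_apply]
      homEquiv_naturality_right {M N N'} φ n :=
        NatTrans.naturality_apply (adjCoyonedaIso hR hL hF hG α β M).hom n φ }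

end Adjunction

theorem statement_18_general {E : Type u} [SmallCategory E] [Preadditive E]
    (S : ExactStructure E)
    {Ar : Type (u + 1)} [Category.{u} Ar] [Abelian Ar] (iR : E ⥤ Ar)
    {Al : Type (u + 1)} [Category.{u} Al] [Abelian Al] (iL : E ⥤ Al)
    (hR : IsRightAbelianEnvelope.{u, u, u + 1, u, u + 1, u} S iR)
    (hL : IsLeftAbelianEnvelope.{u, u, u + 1, u, u + 1, u} S iL) :
    ∃ (F : Ar ⥤ Al) (G : Al ⥤ Ar),
      IsRightExactAb F ∧ Nonempty (iR ⋙ F ≅ iL) ∧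
      IsLeftExactAb G ∧ Nonempty (iL ⋙ G ≅ iR) ∧
      Nonempty (F ⊣ G) := by
  obtain ⟨F, hF, ⟨α⟩⟩ := hR.essSurj Al iL hL.rightExact
  obtain ⟨G, hG, ⟨β⟩⟩ := hL.essSurj Ar iR hR.leftExact
  exact ⟨F, G, hF, ⟨α⟩, hG, ⟨β⟩, ⟨envelopesAdjunction hR hL hF hG α β⟩⟩

/-- If the exact category `(E, S)` admits both a right abelian envelope `(A_r, i_R)` and a
left abelian envelope `(A_l, i_L)`, then there are a right exact functor `F : A_r ⥤ A_l`
with `i_R ⋙ F ≅ i_L` and a left exact functor `G : A_l ⥤ A_r` with `i_L ⋙ G ≅ i_R`, and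
`F` is left adjoint to `G`. -/
theorem statement_18 {E : Type u} [SmallCategory E] [Preadditive E] [HasFiniteBiproducts E]
    (S : ExactStructure E)
    {Ar : Type (u + 1)} [Category.{u} Ar] [Abelian Ar] (iR : E ⥤ Ar)
    {Al : Type (u + 1)} [Category.{u} Al] [Abelian Al] (iL : E ⥤ Al)
    (hR : IsRightAbelianEnvelope.{u, u, u + 1, u, u + 1, u} S iR)
    (hL : IsLeftAbelianEnvelope.{u, u, u + 1, u, u + 1, u} S iL) :
    ∃ (F : Ar ⥤ Al) (G : Al ⥤ Ar),
      IsRightExactAb F ∧ Nonempty (iR ⋙ F ≅ iL) ∧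
      IsLeftExactAb G ∧ Nonempty (iL ⋙ G ≅ iR) ∧
      Nonempty (F ⊣ G) :=
  statement_18_general S iR iL hR hL

end Env
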